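/- Let P, Q ⊆ ℕ be disjoint and inhabited. Then there exists a winning Arthur+Nimue strategy for the reduction game of the basic oracle {{0},{1}} to the basic oracle {P, Q} whose Arthur strategy is recursive in the decoding oracle d_{P,Q}. (This expresses that d_{P,Q} ∨ c_{P,Q} is the omniscient degree ω.) In particular, if d_{P,Q} has a partial computable extension, then there is such a winning pair with partial computable Arthur strategy. -/

import Mathlib

open Classical in
/-- The oracle game: the list of previous answers by Merlin up to stage `i`,
for the answer sequence `s`. -/
def prefixList (s : ℕ → ℕ) (i : ℕ) : List ℕ := List.ofFn (fun j : Fin i => s j)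

/-- A winning Arthur+Nimue strategy for the reduction game of the basic oracle `ℱ`
to the basic oracle `𝒢`. -/
def Winning (ℱ 𝒢 : Set (Set ℕ)) (σ : List ℕ →. Option ℕ) (ν : Set ℕ → List ℕ → Set ℕ) : Prop :=
  (∀ F ∈ ℱ, ∀ l : List ℕ, ν F l ∈ 𝒢) ∧
  ∀ F ∈ ℱ, ∀ s : ℕ → ℕ, (∀ i, s i ∈ ν F (prefixList s i)) →
    ∃ k, (∀ i ≤ k, (σ (prefixList s i)).Dom) ∧
      (∀ i < k, none ∈ σ (prefixList s i)) ∧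
      ∃ u ∈ F, some u ∈ σ (prefixList s k)

/-- The encoding of an Arthur strategy as a partial function `ℕ →. ℕ`, via the
standard Mathlib encodings of `List ℕ` and `Option ℕ`. -/
def arthurCode (σ : List ℕ →. Option ℕ) : ℕ →. ℕ :=
  fun n => (σ (Denumerable.ofNat (List ℕ) n)).map Encodable.encode

open Classical in
/-- The decoding oracle associated to the promise problem `(P, Q)`: value `0` on `P`,
value `1` on `Q`, undefined elsewhere. -/
noncomputable def dOracle (P Q : Set ℕ) : ℕ →. ℕ :=
  fun n => ⟨n ∈ P ∪ Q, fun _ => if n ∈ Q then 1 else 0⟩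

open Classical in
/-- The characteristic function of a set of naturals. -/
noncomputable def chi (A : Set ℕ) : ℕ → ℕ := fun n => if n ∈ A then 1 else 0

/-- The coded cartesian product of two sets of naturals. -/
def tensor (P Q : Set ℕ) : Set ℕ := {x | ∃ p ∈ P, ∃ q ∈ Q, x = Nat.pair p q}

infixl:70 " ⊗ " => tensor

/-- Oracle computability, as in Mathlib's `Nat.RecursiveIn`. -/
inductive Nat.RecursiveInOracle (g : ℕ →. ℕ) : (ℕ →. ℕ) → Prop
  | zero : Nat.RecursiveInOracle g fun _ => 0
  | succ : Nat.RecursiveInOracle g Nat.succ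
  | left : Nat.RecursiveInOracle g fun n => (Nat.unpair n).1
  | right : Nat.RecursiveInOracle g fun n => (Nat.unpair n).2
  | oracle : Nat.RecursiveInOracle g g
  | pair {f h : ℕ →. ℕ} (hf : Nat.RecursiveInOracle g f) (hh : Nat.RecursiveInOracle g h) :
      Nat.RecursiveInOracle g fun n => (Nat.pair <$> f n <*> h n)
  | comp {f h : ℕ →. ℕ} (hf : Nat.RecursiveInOracle g f) (hh : Nat.RecursiveInOracle g h) :
      Nat.RecursiveInOracle g fun n => h n >>= f
  | prec {f h : ℕ →. ℕ} (hf : Nat.RecursiveInOracle g f) (hh : Nat.RecursiveInOracle g h) :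
      Nat.RecursiveInOracle g
        (Nat.unpaired fun a n =>
          n.rec (f a) fun y IH => do
            let i ← IH
            h (Nat.pair a (Nat.pair y i)))
  | rfind {f : ℕ →. ℕ} (hf : Nat.RecursiveInOracle g f) :
      Nat.RecursiveInOracle g fun a =>
        Nat.rfind fun n => (fun m => m = 0) <$> f (Nat.pair a n)

/-- `f` is T1-reducible to `g`: some partial function recursive in the oracle `g`
extends `f`. -/
def T1Reducible (f g : ℕ →. ℕ) : Prop :=
  ∃ h : ℕ →. ℕ, Nat.RecursiveInOracle g h ∧ ∀ n : ℕ, ∀ a ∈ f n, a ∈ h n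

/-- `f` is T1-computable: it has a partial computable extension. -/
def T1Computable (f : ℕ →. ℕ) : Prop :=
  ∃ h : ℕ →. ℕ, Nat.Partrec h ∧ ∀ n : ℕ, ∀ a ∈ f n, a ∈ h n

/-- Codes for oracle computations: Mathlib's `Nat.Partrec.Code` extended by an
`oracle` constructor. -/
inductive OCode : Type
  | zero : OCode
  | succ : OCode
  | left : OCode
  | right : OCode
  | oracle : OCode
  | pair : OCode → OCode → OCode
  | comp : OCode → OCode → OCode
  | prec : OCode → OCode → OCode
  | rfind' : OCode → OCode

/-- Evaluation of an oracle code relative to the oracle `g`, by the same structural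
recursion as Mathlib's `Nat.Partrec.Code.eval`. -/
def OCode.eval (g : ℕ →. ℕ) : OCode → ℕ →. ℕ
  | .zero => pure 0
  | .succ => Nat.succ
  | .left => ↑fun n : ℕ => n.unpair.1
  | .right => ↑fun n : ℕ => n.unpair.2
  | .oracle => g
  | .pair cf cg => fun n => Nat.pair <$> cf.eval g n <*> cg.eval g n
  | .comp cf cg => fun n => cg.eval g n >>= cf.eval g
  | .prec cf cg =>
    Nat.unpaired fun a n =>
      n.rec (cf.eval g a) fun y IH => do
        let i ← IH
        cg.eval g (Nat.pair a (Nat.pair y i))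
  | .rfind' cf =>
    Nat.unpaired fun a m =>
      (Nat.rfind fun n => (fun m => m = 0) <$> cf.eval g (Nat.pair a (n + m))).map (· + m)

/-- The `n`-th oracle code. -/
def OCode.ofNat : ℕ → OCode
  | 0 => .zero
  | 1 => .succ
  | 2 => .left
  | 3 => .right
  | 4 => .oracle
  | n + 5 =>
    have h1 : (n / 4).unpair.1 < n + 5 :=
      lt_of_le_of_lt (le_trans (Nat.unpair_left_le _) (Nat.div_le_self _ _)) (by omega)
    have h2 : (n / 4).unpair.2 < n + 5 :=
      lt_of_le_of_lt (le_trans (Nat.unpair_right_le _) (Nat.div_le_self _ _)) (by omega)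
    if n % 4 = 0 then .pair (OCode.ofNat (n / 4).unpair.1) (OCode.ofNat (n / 4).unpair.2)
    else if n % 4 = 1 then .comp (OCode.ofNat (n / 4).unpair.1) (OCode.ofNat (n / 4).unpair.2)
    else if n % 4 = 2 then .prec (OCode.ofNat (n / 4).unpair.1) (OCode.ofNat (n / 4).unpair.2)
    else .rfind' (OCode.ofNat (n / 4).unpair.1)

/-- `φ_e^g`: the evaluation of the `e`-th oracle code relative to the oracle `g`. -/
def phi (g : ℕ →. ℕ) (e : ℕ) : ℕ →. ℕ := (OCode.ofNat e).eval g

/-- `H_i^A`: the set of (codes of) oracle programs which, run with the characteristic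
function of `A` as oracle, halt on input `0` with output `i`. -/
def Hset (A : Set ℕ) (i : ℕ) : Set ℕ := {e : ℕ | (i : ℕ) ∈ phi (chi A) e 0}

/-! Arthur wins by asking the oracle once and returning the decoded answer: when the secret is
`{0}`, Nimue commits to `P`, when it is `{1}`, to `Q`, so whatever Merlin answers lies in `P`
or `Q` accordingly, and `d_{P,Q}` turns it into `0` or `1`. -/

namespace Nat.RecursiveInOracle

variable {g f : ℕ →. ℕ}

theorem of_partrec (hf : Nat.Partrec f) : Nat.RecursiveInOracle g f := by
  induction hf with
  | zero => exact .zero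
  | succ => exact .succ
  | left => exact .left
  | right => exact .right
  | pair _ _ ih₁ ih₂ => exact .pair ih₁ ih₂
  | comp _ _ ih₁ ih₂ => exact .comp ih₁ ih₂
  | prec _ _ ih₁ ih₂ => exact .prec ih₁ ih₂
  | rfind _ ih => exact .rfind ih

theorem partrec (hf : Nat.RecursiveInOracle g f) (hg : Nat.Partrec g) : Nat.Partrec f := by
  induction hf with
  | zero => exact .zero
  | succ => exact .succ
  | left => exact .left
  | right => exact .right
  | oracle => exact hg
  | pair _ _ ih₁ ih₂ => exact .pair ih₁ ih₂
  | comp _ _ ih₁ ih₂ => exact .comp ih₁ ih₂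
  | prec _ _ ih₁ ih₂ => exact .prec ih₁ ih₂
  | rfind _ ih => exact .rfind ih

theorem of_eq {f' : ℕ →. ℕ} (hf : Nat.RecursiveInOracle g f) (H : ∀ n, f n = f' n) :
    Nat.RecursiveInOracle g f' :=
  funext H ▸ hf

theorem comp_primrec (hf : Nat.RecursiveInOracle g f) {p : ℕ → ℕ} (hp : Nat.Primrec p) :
    Nat.RecursiveInOracle g fun n => f (p n) :=
  (Nat.RecursiveInOracle.comp hf (of_partrec (Nat.Partrec.of_primrec hp))).of_eq
    fun _ => Part.bind_some _ _

theorem map_succ (hf : Nat.RecursiveInOracle g f) :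
    Nat.RecursiveInOracle g fun n => (f n).map Nat.succ :=
  (Nat.RecursiveInOracle.comp .succ hf).of_eq fun _ => Part.bind_some_eq_map _ _

theorem natCasesOn (z : ℕ) (hf : Nat.RecursiveInOracle g f) :
    Nat.RecursiveInOracle g fun n => Nat.casesOn n (Part.some z) f := by
  have hz : Nat.RecursiveInOracle g fun _ => Part.some z :=
    of_partrec (Nat.Partrec.of_primrec (Nat.Primrec.const z))
  have hp : Nat.Primrec fun n => Nat.pair (n - 1) (min n 1) :=
    Primrec.nat_iff.mp (Primrec₂.natPair.comp (Primrec.nat_sub.comp .id (.const 1))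
      (Primrec.nat_min.comp .id (.const 1)))
  -- a primitive recursion on `min n 1` steps, whose only step evaluates `f (n - 1)`
  refine (comp_primrec (.prec hz (comp_primrec hf .left)) hp).of_eq fun n => ?_
  cases n <;> simp

end Nat.RecursiveInOracle

def queryThenDecode (g : ℕ →. ℕ) : List ℕ →. Option ℕ
  | [] => Part.some none
  | a :: _ => (g a).map some

theorem arthurCode_queryThenDecode (g : ℕ →. ℕ) :
    arthurCode (queryThenDecode g) =
      fun n => Nat.casesOn n (Part.some 0) fun m => (g m.unpair.1).map Nat.succ := by
  funext n
  cases n with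
  | zero => simp [arthurCode, queryThenDecode]
  | succ m =>
    simp [arthurCode, queryThenDecode, Denumerable.list_ofNat_succ, Part.map_map,
      Function.comp_def]

theorem recursiveInOracle_arthurCode_queryThenDecode (g : ℕ →. ℕ) :
    Nat.RecursiveInOracle g (arthurCode (queryThenDecode g)) := by
  rw [arthurCode_queryThenDecode]
  exact .natCasesOn 0 (.map_succ (.comp_primrec .oracle .left))

theorem partrec_iff_partrec_arthurCode (σ : List ℕ →. Option ℕ) :
    Partrec σ ↔ Nat.Partrec (arthurCode σ) := by
  simp only [Partrec, Denumerable.decode_eq_ofNat, Part.coe_some, Part.bind_some]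
  rfl

theorem winning_queryThenDecode {ℱ 𝒢 : Set (Set ℕ)} (g : ℕ →. ℕ)
    (ν : Set ℕ → Set ℕ) (hν : ∀ F ∈ ℱ, ν F ∈ 𝒢)
    (hg : ∀ F ∈ ℱ, ∀ a ∈ ν F, ∃ u ∈ F, u ∈ g a) :
    Winning ℱ 𝒢 (queryThenDecode g) fun F _ => ν F := by
  refine ⟨fun F hF _ => hν F hF, fun F hF s hs => ?_⟩
  obtain ⟨u, huF, hu⟩ := hg F hF (s 0) (hs 0)
  have hdecide : some u ∈ queryThenDecode g (prefixList s 1) := Part.mem_map some hu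
  refine ⟨1, fun i hi => ?_, fun i hi => ?_, u, huF, hdecide⟩
  · interval_cases i
    · exact trivial
    · exact Part.dom_iff_mem.2 ⟨_, hdecide⟩
  · obtain rfl : i = 0 := by omega
    exact Part.mem_some _

theorem zero_mem_dOracle {P Q : Set ℕ} (hdisj : Disjoint P Q) {a : ℕ} (ha : a ∈ P) :
    0 ∈ dOracle P Q a :=
  ⟨Or.inl ha, if_neg (Set.disjoint_left.mp hdisj ha)⟩

theorem one_mem_dOracle {P Q : Set ℕ} {a : ℕ} (ha : a ∈ Q) : 1 ∈ dOracle P Q a :=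
  ⟨Or.inr ha, if_pos ha⟩

open Classical in
theorem winning_queryThenDecode_of_decodes {P Q : Set ℕ} {g : ℕ →. ℕ}
    (hgP : ∀ a ∈ P, 0 ∈ g a) (hgQ : ∀ a ∈ Q, 1 ∈ g a) :
    Winning {{0}, {1}} {P, Q} (queryThenDecode g) fun F _ => if 0 ∈ F then P else Q := by
  refine winning_queryThenDecode g _ ?_ ?_
  · rintro F (rfl | rfl) <;> simp
  · rintro F (rfl | rfl) a ha
    · exact ⟨0, rfl, hgP a (by simpa using ha)⟩
    · exact ⟨1, rfl, hgQ a (by simpa using ha)⟩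

theorem stmt8_general (P Q : Set ℕ) (hdisj : Disjoint P Q) :
    (∃ (σ : List ℕ →. Option ℕ) (ν : Set ℕ → List ℕ → Set ℕ),
      Nat.RecursiveInOracle (dOracle P Q) (arthurCode σ) ∧ Winning {{0}, {1}} {P, Q} σ ν) ∧
    (T1Computable (dOracle P Q) →
      ∃ (σ : List ℕ →. Option ℕ) (ν : Set ℕ → List ℕ → Set ℕ),
        Partrec σ ∧ Winning {{0}, {1}} {P, Q} σ ν) := by
  have hdP : ∀ a ∈ P, 0 ∈ dOracle P Q a := fun _ => zero_mem_dOracle hdisj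
  have hdQ : ∀ a ∈ Q, 1 ∈ dOracle P Q a := fun _ => one_mem_dOracle
  refine ⟨⟨_, _, recursiveInOracle_arthurCode_queryThenDecode _,
    winning_queryThenDecode_of_decodes hdP hdQ⟩, ?_⟩
  rintro ⟨h, hh, hext⟩
  refine ⟨_, _, ?_, winning_queryThenDecode_of_decodes (g := h)
    (fun a ha => hext a 0 (hdP a ha)) (fun a ha => hext a 1 (hdQ a ha))⟩
  exact (partrec_iff_partrec_arthurCode _).2
    ((recursiveInOracle_arthurCode_queryThenDecode h).partrec hh)

theorem stmt8 (P Q : Set ℕ) (hdisj : Disjoint P Q) (hP : P.Nonempty) (hQ : Q.Nonempty) :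
    (∃ (σ : List ℕ →. Option ℕ) (ν : Set ℕ → List ℕ → Set ℕ),
      Nat.RecursiveInOracle (dOracle P Q) (arthurCode σ) ∧ Winning {{0}, {1}} {P, Q} σ ν) ∧
    (T1Computable (dOracle P Q) →
      ∃ (σ : List ℕ →. Option ℕ) (ν : Set ℕ → List ℕ → Set ℕ),
        Partrec σ ∧ Winning {{0}, {1}} {P, Q} σ ν) :=
  stmt8_general P Q hdisj
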